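/- arXiv:1601.01891 — 5 statements merged into one kernel-verified Lean document; each statement's English description precedes it below -/
import Mathlib

section
/- For any finite list L of nodes of a k-ary tree U that is a D-visit from a node λ (for a priority list D of colors), the list L has no repetitions and the set of its elements, ordered by the prefix relation, forms a subtree of U rooted at λ. -/
/-- A `k`-ary tree: a prefix-closed set of finite lists over colors `< k`,
containing the empty list. -/
def IsKTree (k : ℕ) (U : Set (List ℕ)) : Prop :=
  [] ∈ U ∧ (∀ l ∈ U, ∀ p : List ℕ, p <+: l → p ∈ U) ∧ ∀ l ∈ U, ∀ c ∈ l, c < k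

/-- `L` is `D`-complete: every child (in `U`) with color in `D` of a node of `L` is in `L`. -/
def DComplete (U : Set (List ℕ)) (D : List ℕ) (L : List (List ℕ)) : Prop :=
  ∀ μ ∈ L, ∀ d ∈ D, μ ++ [d] ∈ U → μ ++ [d] ∈ L

/-- `ν` is the `n`-th `d`-expansion of `M`: `ν = μ ++ [d] ∈ U` for some `μ ∈ M`, and exactly
`n` nodes of `M` lexicographically below `μ` have a `d`-child in `U`. -/
def DExpansion (U : Set (List ℕ)) (M : List (List ℕ)) (n d : ℕ) (ν : List ℕ) : Prop :=
  ν ∈ U ∧ ∃ μ ∈ M, ν = μ ++ [d] ∧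
    {η | η ∈ M ∧ η ++ [d] ∈ U ∧ List.Lex (· < ·) η μ}.ncard = n

/-- `DVisit U D lam L` : `L` is a `D`-visit of `U` from `lam`. -/
inductive DVisit (U : Set (List ℕ)) : List ℕ → List ℕ → List (List ℕ) → Prop
  | base (lam : List ℕ) : lam ∈ U → DVisit U [] lam [lam]
  | step (d : ℕ) (D : List ℕ) (lam : List ℕ) (M : List (List ℕ))
      (Ls : List (List (List ℕ))) :
      DVisit U D lam M →
      (1 < Ls.length → DComplete U D M) →
      (∀ j : Fin Ls.length, Ls.get j ≠ []) →
      (∀ j : Fin Ls.length, DExpansion U M j.1 d ((Ls.get j).headI)) →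
      (∀ j : Fin Ls.length, DVisit U (D ++ [d]) ((Ls.get j).headI) (Ls.get j)) →
      (∀ j : Fin Ls.length, j.1 + 1 < Ls.length → DComplete U (d :: D) (Ls.get j)) →
      DVisit U (d :: D) lam (M ++ Ls.flatten)

/-- `U_D(lam)`: the nodes of `U` extending `lam` by a suffix with colors only from `D`. -/
def subtreeD (U : Set (List ℕ)) (D : List ℕ) (lam : List ℕ) : Set (List ℕ) :=
  {μ | μ ∈ U ∧ ∃ η : List ℕ, μ = lam ++ η ∧ ∀ c ∈ η, c ∈ D}

/-- `f` enumerates the complete `D`-visit of `U` from `lam`: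
each initial segment `[f 0, …, f m]` is a `D`-visit from `lam`. -/
def Enumerates (U : Set (List ℕ)) (D lam : List ℕ) (f : ℕ → List ℕ) : Prop :=
  ∀ m : ℕ, DVisit U D lam ((List.range (m + 1)).map f)

/-- `μ` is stable for the enumeration `f`: all later nodes are proper descendants of `μ`. -/
def Stable (f : ℕ → List ℕ) (μ : List ℕ) : Prop :=
  ∃ m, f m = μ ∧ ∀ n, m < n → μ <+: f n ∧ μ ≠ f n

/-- `r` is an infinite branch of the tree `T` (of finite lists): an infinite chain
under the prefix order, downward closed within `T`. -/
def IsInfBranchL (T : Set (List ℕ)) (r : Set (List ℕ)) : Prop :=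
  r ⊆ T ∧ r.Infinite ∧ (∀ μ ∈ r, ∀ ν ∈ r, μ <+: ν ∨ ν <+: μ) ∧
  (∀ μ ∈ r, ∀ η ∈ T, η <+: μ → η ∈ r)

/-!
Induction on the visit. In a step `L = M ++ L₀ ++ ⋯ ++ L_{n-1}` for `D = d :: D'`, the nodes of
`M` extend `lam` by colors from `D'` only, while every node of `L_j` extends the `d`-child
`ν_j ++ [d]` of a node `ν_j ∈ M`. As `d ∉ D'`, the part of a node before its first `d` recovers
`ν_j`, and `ν_j` determines `j` through its lexicographic rank. Hence the blocks are disjoint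
from `M` and from each other, and a prefix of a node of `L_j` either lies above `ν_j ++ [d]`
(so in `L_j`) or is a prefix of `ν_j` (so in `M`).
-/

theorem List.takeWhile_ne_append_cons {α : Type*} [DecidableEq α] {a : α} {s t : List α}
    (h : a ∉ s) : (s ++ a :: t).takeWhile (· ≠ a) = s := by
  rw [List.takeWhile_append_of_pos fun b hb => decide_eq_true (ne_of_mem_of_not_mem hb h),
    List.takeWhile_cons_of_neg (by simp), List.append_nil]

theorem List.eq_of_append_cons_eq_of_notMem {α : Type*} {a : α} {s s' t t' : List α}
    (hs : a ∉ s) (hs' : a ∉ s') (h : s ++ a :: t = s' ++ a :: t') : s = s' := by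
  classical
  rw [← List.takeWhile_ne_append_cons (t := t) hs, h, List.takeWhile_ne_append_cons hs']

section subtreeD

variable {U : Set (List ℕ)} {D D' lam ν μ x : List ℕ} {d : ℕ}

theorem subtreeD_mono (h : D ⊆ D') : subtreeD U D lam ⊆ subtreeD U D' lam :=
  fun _ ⟨hμ, η, hη, hηD⟩ => ⟨hμ, η, hη, fun c hc => h (hηD c hc)⟩

theorem prefix_of_mem_subtreeD (h : μ ∈ subtreeD U D lam) : lam <+: μ := by
  obtain ⟨-, η, rfl, -⟩ := h
  exact List.prefix_append lam η

theorem mem_subtreeD_trans (hν : ν ∈ subtreeD U D lam) (hμ : μ ∈ subtreeD U D ν) :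
    μ ∈ subtreeD U D lam := by
  obtain ⟨-, η, rfl, hηD⟩ := hν
  obtain ⟨hμU, η', rfl, hη'D⟩ := hμ
  refine ⟨hμU, η ++ η', List.append_assoc _ _ _, fun c hc => ?_⟩
  rcases List.mem_append.1 hc with hc | hc
  exacts [hηD c hc, hη'D c hc]

theorem append_singleton_mem_subtreeD (hν : ν ∈ subtreeD U D lam) (hd : d ∈ D)
    (hνd : ν ++ [d] ∈ U) : ν ++ [d] ∈ subtreeD U D lam :=
  mem_subtreeD_trans hν ⟨hνd, [d], rfl, by simpa using hd⟩

theorem eq_of_append_singleton_prefix (hd : d ∉ D) (hν : ν ∈ subtreeD U D lam)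
    (hμ : μ ∈ subtreeD U D lam) (hνx : ν ++ [d] <+: x) (hμx : μ ++ [d] <+: x) : ν = μ := by
  obtain ⟨-, η, rfl, hηD⟩ := hν
  obtain ⟨-, η', rfl, hη'D⟩ := hμ
  obtain ⟨t, rfl⟩ := hνx
  obtain ⟨t', ht'⟩ := hμx
  simp only [List.append_assoc, List.singleton_append, List.append_cancel_left_eq] at ht'
  rw [List.eq_of_append_cons_eq_of_notMem (fun h => hd (hη'D d h)) (fun h => hd (hηD d h)) ht']

theorem notMem_subtreeD_of_append_singleton_prefix (hd : d ∉ D) (hν : ν ∈ subtreeD U D lam)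
    (hνx : ν ++ [d] <+: x) : x ∉ subtreeD U D lam := by
  rintro ⟨-, η, rfl, hηD⟩
  obtain ⟨-, σ, rfl, -⟩ := hν
  obtain ⟨t, ht⟩ := hνx
  simp only [List.append_assoc, List.append_cancel_left_eq] at ht
  exact hd (hηD d (ht ▸ by simp))

end subtreeD

theorem DExpansion.index_eq {U : Set (List ℕ)} {M : List (List ℕ)} {i j d : ℕ} {ν : List ℕ}
    (hi : DExpansion U M i d ν) (hj : DExpansion U M j d ν) : i = j := by
  obtain ⟨-, μ, -, hμ, rfl⟩ := hi
  obtain ⟨-, μ', -, hμ', rfl⟩ := hj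
  obtain rfl : μ = μ' := (List.append_singleton_inj.1 (hμ.symm.trans hμ')).1
  rfl

namespace DVisit

variable {U : Set (List ℕ)} {D lam μ : List ℕ} {L : List (List ℕ)}

theorem self_mem (hL : DVisit U D lam L) : lam ∈ L := by
  induction hL with
  | base lam _ => exact List.mem_singleton_self lam
  | step _ _ _ _ _ _ _ _ _ _ _ ihM _ => exact List.mem_append_left _ ihM

theorem mem_subtreeD (hL : DVisit U D lam L) : ∀ μ ∈ L, μ ∈ subtreeD U D lam := by
  induction hL with
  | base lam hlam =>
    intro μ hμ
    rw [List.mem_singleton.1 hμ]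
    exact ⟨hlam, [], by simp⟩
  | step d D lam M Ls _ _ _ hexp _ _ ihM ihLs =>
    have hsub : D ⊆ d :: D := List.subset_cons_self d D
    intro μ hμ
    rcases List.mem_append.1 hμ with hμ | hμ
    · exact subtreeD_mono hsub (ihM μ hμ)
    obtain ⟨B, hB, hμB⟩ := List.mem_flatten.1 hμ
    obtain ⟨j, rfl⟩ := List.get_of_mem hB
    obtain ⟨hheadU, ν, hνM, hhead, -⟩ := hexp j
    have hνd : ν ++ [d] ∈ subtreeD U (d :: D) lam :=
      append_singleton_mem_subtreeD (subtreeD_mono hsub (ihM ν hνM)) List.mem_cons_self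
        (hhead ▸ hheadU)
    refine mem_subtreeD_trans hνd (hhead ▸ subtreeD_mono ?_ (ihLs j μ hμB))
    simp [List.subset_def, or_comm]

theorem prefix_of_mem (hL : DVisit U D lam L) (hμ : μ ∈ L) : lam <+: μ :=
  prefix_of_mem_subtreeD (hL.mem_subtreeD μ hμ)

theorem prefix_closed (hL : DVisit U D lam L) :
    ∀ μ ∈ L, ∀ η : List ℕ, lam <+: η → η <+: μ → η ∈ L := by
  induction hL with
  | base lam _ =>
    intro μ hμ η hlη hημ
    rw [List.mem_singleton] at hμ ⊢
    subst hμ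
    exact hlη.eq_of_length (le_antisymm hlη.length_le hημ.length_le) |>.symm
  | step d D lam M Ls _ _ _ hexp hvis _ ihM ihLs =>
    intro μ hμ η hlη hημ
    rcases List.mem_append.1 hμ with hμ | hμ
    · exact List.mem_append_left _ (ihM μ hμ η hlη hημ)
    obtain ⟨B, hB, hμB⟩ := List.mem_flatten.1 hμ
    obtain ⟨j, rfl⟩ := List.get_of_mem hB
    have hblock (h : η ∈ Ls.get j) : η ∈ M ++ Ls.flatten :=
      List.mem_append_right _ (List.mem_flatten.2 ⟨_, hB, h⟩)
    rcases List.prefix_or_prefix_of_prefix hημ ((hvis j).prefix_of_mem hμB) with hηh | hhη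
    · obtain ⟨-, ν, hνM, hhead, -⟩ := hexp j
      rw [hhead, List.prefix_concat_iff] at hηh
      rcases hηh with rfl | hην
      · exact hblock (hhead ▸ (hvis j).self_mem)
      · exact List.mem_append_left _ (ihM ν hνM η hlη hην)
    · exact hblock (ihLs j μ hμB η hhη hημ)

theorem nodup (hL : DVisit U D lam L) (hD : D.Nodup) : L.Nodup := by
  induction hL with
  | base lam _ => exact List.nodup_singleton lam
  | step d D lam M Ls hM _ _ hexp hvis _ ihM ihLs =>
    obtain ⟨hdD, hD⟩ := List.nodup_cons.1 hD
    have hDd : (D ++ [d]).Nodup := (List.perm_append_singleton d D).nodup_iff.2 (hD.cons hdD)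
    have hparent (j : Fin Ls.length) (x : List ℕ) (hx : x ∈ Ls.get j) :
        ∃ ν ∈ M, (Ls.get j).headI = ν ++ [d] ∧ ν ++ [d] <+: x := by
      obtain ⟨-, ν, hνM, hhead, -⟩ := hexp j
      exact ⟨ν, hνM, hhead, hhead ▸ (hvis j).prefix_of_mem hx⟩
    refine List.nodup_append.2 ⟨ihM hD, List.nodup_flatten.2 ⟨?_, ?_⟩, ?_⟩
    · intro B hB
      obtain ⟨j, rfl⟩ := List.get_of_mem hB
      exact ihLs j hDd
    · refine List.pairwise_iff_get.2 fun i j hij x hxi hxj => (Fin.ne_of_lt hij) ?_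
      obtain ⟨ν, hνM, hheadi, hνx⟩ := hparent i x hxi
      obtain ⟨ν', hν'M, hheadj, hν'x⟩ := hparent j x hxj
      have hνν' := eq_of_append_singleton_prefix hdD (hM.mem_subtreeD ν hνM)
        (hM.mem_subtreeD ν' hν'M) hνx hν'x
      have hhead : (Ls.get i).headI = (Ls.get j).headI := by rw [hheadi, hheadj, hνν']
      exact Fin.ext ((hexp i).index_eq (hhead ▸ hexp j))
    · rintro x hxM y hyF rfl
      obtain ⟨B, hB, hxB⟩ := List.mem_flatten.1 hyF
      obtain ⟨j, rfl⟩ := List.get_of_mem hB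
      obtain ⟨ν, hνM, -, hνx⟩ := hparent j x hxB
      exact notMem_subtreeD_of_append_singleton_prefix hdD (hM.mem_subtreeD ν hνM) hνx
        (hM.mem_subtreeD x hxM)

end DVisit

theorem dvisit_nodup_subtree_general (U : Set (List ℕ))
    (D : List ℕ) (hDnd : D.Nodup)
    (lam : List ℕ)
    (L : List (List ℕ)) (hL : DVisit U D lam L) :
    L.Nodup ∧ lam ∈ L ∧ (∀ μ ∈ L, μ ∈ U ∧ lam <+: μ) ∧
      (∀ μ ∈ L, ∀ η : List ℕ, lam <+: η → η <+: μ → η ∈ L) :=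
  ⟨hL.nodup hDnd, hL.self_mem, fun μ hμ => ⟨(hL.mem_subtreeD μ hμ).1, hL.prefix_of_mem hμ⟩,
    hL.prefix_closed⟩

/-- Any D-visit L from lam has no repetitions, and its set of elements,
ordered by the prefix relation, is a subtree of U rooted at lam. -/
theorem dvisit_nodup_subtree (k : ℕ) (U : Set (List ℕ)) (hU : IsKTree k U)
    (D : List ℕ) (hDnd : D.Nodup) (hDk : ∀ d ∈ D, d < k)
    (lam : List ℕ) (hlam : lam ∈ U)
    (L : List (List ℕ)) (hL : DVisit U D lam L) :
    L.Nodup ∧ lam ∈ L ∧ (∀ μ ∈ L, μ ∈ U ∧ lam <+: μ) ∧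
      (∀ μ ∈ L, ∀ η : List ℕ, lam <+: η → η <+: μ → η ∈ L) :=
  dvisit_nodup_subtree_general U D hDnd lam L hL
end

section
/- Let U_D(λ) be infinite and f the enumeration of the complete D-visit from λ. If f(m) is stable, then there exists n > m such that f(n) is stable. Consequently the complete D-visit contains infinitely many stable nodes. -/
/-!
A `(d :: D)`-visit is a `D`-visit `M` followed by `(D ++ [d])`-visits rooted at the
`d`-expansions of `M`, taken in the order of their indices. Once the enumeration has left `M`,
the index of the expansion below the current node is nondecreasing and bounded by `|M|`, hence
eventually constant. The first node carrying the final index is the root of the last sub-visit: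
everything after it lies strictly below it (the nodes of a visit with distinct colors are
distinct), so it is stable, and the enumeration from it on is again a complete visit, to which
the argument applies once more. If the color `d` never occurs, the visit is a `D`-visit and we
recurse on the color list.
-/

namespace List

variable {α : Type*}

theorem take_map_range (f : ℕ → α) {s n : ℕ} (h : s ≤ n) :
    ((range n).map f).take s = (range s).map f := by
  rw [← map_take, take_range, min_eq_left h]

theorem drop_map_range (f : ℕ → α) (s n : ℕ) :
    ((range n).map f).drop s = (range (n - s)).map (fun i => f (s + i)) := by
  apply ext_getElem (by simp)
  intro i _ _
  simp

theorem eq_map_range_of_map_range_eq_append {f : ℕ → α} {n : ℕ} {A B : List α}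
    (h : (range n).map f = A ++ B) :
    A = (range A.length).map f ∧ B = (range (n - A.length)).map (fun i => f (A.length + i)) := by
  have hlen : A.length ≤ n := by
    have := congrArg length h
    simp only [length_map, length_range, length_append] at this
    omega
  constructor
  · rw [← take_map_range f hlen, h, take_left]
  · rw [← drop_map_range, h, drop_left]

theorem pairwise_map_range_iff {f : ℕ → α} {R : α → α → Prop} {n : ℕ} :
    ((range n).map f).Pairwise R ↔ ∀ i j, i < j → j < n → R (f i) (f j) := by
  simp only [pairwise_iff_getElem, length_map, length_range, getElem_map, getElem_range]
  exact ⟨fun h i j hij hj => h i j (by omega) hj hij, fun h i j _ hj hij => h i j hij hj⟩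

theorem pairwise_flatten_of_forall_mem_getElem {Ls : List (List α)} (g : α → ℕ)
    (h : ∀ j (hj : j < Ls.length), ∀ x ∈ Ls[j], g x = j) :
    Ls.flatten.Pairwise (fun x y => g x ≤ g y) := by
  rw [pairwise_flatten, pairwise_iff_getElem]
  refine ⟨fun l hl => ?_, fun i j hi hj hij x hx y hy => ?_⟩
  · obtain ⟨j, hj, rfl⟩ := getElem_of_mem hl
    exact pairwise_of_forall_mem_list fun x hx y hy => by rw [h j hj x hx, h j hj y hy]
  · rw [h i hi x hx, h j hj y hy]
    exact hij.le

end List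

theorem Nat.exists_forall_ge_eq_of_monotone {G : ℕ → ℕ} (hG : Monotone G)
    (hB : BddAbove (Set.range G)) :
    ∃ N, (∀ i, N ≤ i → G i = G N) ∧ ∀ i < N, G i < G N := by
  obtain ⟨N₀, hN₀⟩ := Nat.sSup_mem (Set.range_nonempty G) hB
  have hmax : ∀ i, G i ≤ G N₀ := fun i => hN₀ ▸ le_csSup hB ⟨i, rfl⟩
  have hex : ∃ N, G N = G N₀ := ⟨N₀, rfl⟩
  refine ⟨Nat.find hex, fun i hi => ?_, fun i hi => ?_⟩
  · rw [Nat.find_spec hex]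
    exact le_antisymm (hmax i) (Nat.find_spec hex ▸ hG hi)
  · rw [Nat.find_spec hex]
    exact lt_of_le_of_ne (hmax i) (Nat.find_min hex hi)

/-- Below a `d`-expansion `μ ++ [d]` of a `D`-visit from `lam` with `d ∉ D`, this is `μ`. -/
def expansionParent (lam : List ℕ) (d : ℕ) (x : List ℕ) : List ℕ :=
  lam ++ (x.drop lam.length).takeWhile (· ≠ d)

/-- The index `n` of the `d`-expansion of `M` lying below `x`, as in `DExpansion`. -/
noncomputable def expansionIndex (U : Set (List ℕ)) (M : List (List ℕ)) (d : ℕ)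
    (lam x : List ℕ) : ℕ :=
  {η | η ∈ M ∧ η ++ [d] ∈ U ∧ List.Lex (· < ·) η (expansionParent lam d x)}.ncard

/-- The conditions `DVisit.step` imposes on the sub-visits `Ls` of `M ++ Ls.flatten`. -/
def ExpansionVisits (U : Set (List ℕ)) (D : List ℕ) (d : ℕ) (M : List (List ℕ))
    (Ls : List (List (List ℕ))) : Prop :=
  (∀ j : Fin Ls.length, Ls.get j ≠ []) ∧
    (∀ j : Fin Ls.length, DExpansion U M j.1 d (Ls.get j).headI) ∧
    ∀ j : Fin Ls.length, DVisit U (D ++ [d]) (Ls.get j).headI (Ls.get j)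

theorem expansionParent_append {d : ℕ} {lam w : List ℕ} (hw : d ∉ w) (s : List ℕ) :
    expansionParent lam d (lam ++ (w ++ d :: s)) = lam ++ w := by
  have hw' : ∀ c ∈ w, (!decide (c = d)) = true := fun c hc => by
    simpa using ne_of_mem_of_not_mem hc hw
  simp [expansionParent, List.takeWhile_append_of_pos hw']

theorem expansionIndex_le_length (U : Set (List ℕ)) (M : List (List ℕ)) (d : ℕ)
    (lam x : List ℕ) :
    expansionIndex U M d lam x ≤ M.length := by
  calc expansionIndex U M d lam x ≤ (M.toFinset : Set (List ℕ)).ncard :=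
        Set.ncard_le_ncard (fun η hη => by simpa using hη.1) M.toFinset.finite_toSet
    _ = M.toFinset.card := Set.ncard_coe_finset _
    _ ≤ M.length := M.toFinset_card_le

namespace DVisit

variable {U : Set (List ℕ)} {E lam : List ℕ} {L : List (List ℕ)}

theorem eq_singleton_of_nil (h : DVisit U [] lam L) : L = [lam] := by
  cases h
  rfl

theorem ne_nil (h : DVisit U E lam L) : L ≠ [] := by
  induction h with
  | base => simp
  | step _ _ _ _ _ _ _ _ _ _ _ ihM => simp [ihM]

theorem exists_decomp_of_cons {d : ℕ} {D : List ℕ} (h : DVisit U (d :: D) lam L) :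
    ∃ M Ls, L = M ++ Ls.flatten ∧ DVisit U D lam M ∧ ExpansionVisits U D d M Ls := by
  cases h with
  | step _ _ _ M Ls hM _ hne hexp hpv => exact ⟨M, Ls, rfl, hM, hne, hexp, hpv⟩

theorem exists_eq_append (h : DVisit U E lam L) {x : List ℕ} (hx : x ∈ L) :
    ∃ w, x = lam ++ w ∧ ∀ c ∈ w, c ∈ E := by
  induction h generalizing x with
  | base lam _ => exact ⟨[], by simpa using hx, by simp⟩
  | step d D lam M Ls _ _ _ hexp _ _ ihM ihpv =>
    rcases List.mem_append.mp hx with hx | hx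
    · obtain ⟨w, rfl, hw⟩ := ihM hx
      exact ⟨w, rfl, fun c hc => List.mem_cons_of_mem d (hw c hc)⟩
    · obtain ⟨l, hl, hxl⟩ := List.mem_flatten.mp hx
      obtain ⟨j, rfl⟩ := List.get_of_mem hl
      obtain ⟨w, rfl, hw⟩ := ihpv j hxl
      obtain ⟨-, μ, hμ, hν, -⟩ := hexp j
      obtain ⟨w₁, rfl, hw₁⟩ := ihM hμ
      refine ⟨w₁ ++ d :: w, by rw [hν]; simp, fun c hc => ?_⟩
      simp only [List.mem_append, List.mem_cons] at hc hw ⊢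
      rcases hc with hc | rfl | hc
      · exact Or.inr (hw₁ c hc)
      · exact Or.inl rfl
      · rcases hw c hc with hc | hc
        · exact Or.inr hc
        · exact Or.inl (by simpa using hc)

theorem prefix_of_mem_s7 (h : DVisit U E lam L) {x : List ℕ} (hx : x ∈ L) : lam <+: x := by
  obtain ⟨w, rfl, -⟩ := h.exists_eq_append hx
  exact List.prefix_append lam w

theorem not_mem_drop {d : ℕ} (h : DVisit U E lam L) (hd : d ∉ E) {x : List ℕ} (hx : x ∈ L) :
    d ∉ x.drop lam.length := by
  obtain ⟨w, rfl, hw⟩ := h.exists_eq_append hx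
  simpa using fun hdw => hd (hw d hdw)

end DVisit

theorem DExpansion.exists_eq_of_prefix {U : Set (List ℕ)} {D lam : List ℕ} {M : List (List ℕ)}
    {d j : ℕ} {ν x : List ℕ} (hM : DVisit U D lam M) (hd : d ∉ D) (h : DExpansion U M j d ν)
    (hx : ν <+: x) :
    ∃ w s, d ∉ w ∧ x = lam ++ (w ++ d :: s) ∧ expansionIndex U M d lam x = j := by
  obtain ⟨-, μ, hμ, rfl, hj⟩ := h
  obtain ⟨w, rfl, hw⟩ := hM.exists_eq_append hμ
  obtain ⟨s, rfl⟩ := hx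
  have hdw : d ∉ w := fun hdw => hd (hw d hdw)
  refine ⟨w, s, hdw, by simp, ?_⟩
  rw [expansionIndex, show lam ++ w ++ [d] ++ s = lam ++ (w ++ d :: s) by simp,
    expansionParent_append hdw, hj]

namespace ExpansionVisits

variable {U : Set (List ℕ)} {D lam : List ℕ} {d : ℕ} {M : List (List ℕ)}
  {Ls : List (List (List ℕ))}

theorem exists_eq_of_mem (hM : DVisit U D lam M) (hd : d ∉ D) (hLs : ExpansionVisits U D d M Ls)
    (j : Fin Ls.length) {x : List ℕ} (hx : x ∈ Ls.get j) :
    ∃ w s, d ∉ w ∧ x = lam ++ (w ++ d :: s) ∧ expansionIndex U M d lam x = j :=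
  (hLs.2.1 j).exists_eq_of_prefix hM hd ((hLs.2.2 j).prefix_of_mem_s7 hx)

theorem expansionIndex_eq (hM : DVisit U D lam M) (hd : d ∉ D)
    (hLs : ExpansionVisits U D d M Ls) (j : Fin Ls.length) {x : List ℕ} (hx : x ∈ Ls.get j) :
    expansionIndex U M d lam x = j := by
  obtain ⟨-, -, -, -, hj⟩ := hLs.exists_eq_of_mem hM hd j hx
  exact hj

theorem mem_drop (hM : DVisit U D lam M) (hd : d ∉ D) (hLs : ExpansionVisits U D d M Ls)
    {x : List ℕ} (hx : x ∈ Ls.flatten) : d ∈ x.drop lam.length := by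
  obtain ⟨l, hl, hxl⟩ := List.mem_flatten.mp hx
  obtain ⟨j, rfl⟩ := List.get_of_mem hl
  obtain ⟨w, s, -, rfl, -⟩ := hLs.exists_eq_of_mem hM hd j hxl
  simp

theorem expansionIndex_concat {P : List (List (List ℕ))} {last : List (List ℕ)}
    (hM : DVisit U D lam M) (hd : d ∉ D) (hLs : ExpansionVisits U D d M (P.concat last)) :
    (∀ x ∈ P.flatten, expansionIndex U M d lam x < P.length) ∧
      ∀ x ∈ last, expansionIndex U M d lam x = P.length := by
  refine ⟨fun x hx => ?_, fun x hx =>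
    hLs.expansionIndex_eq hM hd ⟨P.length, by simp⟩ (by simpa)⟩
  obtain ⟨l, hl, hxl⟩ := List.mem_flatten.mp hx
  obtain ⟨i, rfl⟩ := List.get_of_mem hl
  have hxi : x ∈ (P.concat last).get ⟨i, by simp⟩ := by
    simpa [List.getElem_append_left i.2] using hxl
  rw [hLs.expansionIndex_eq hM hd _ hxi]
  exact i.2

theorem dVisit_tail (hM : DVisit U D lam M) (hd : d ∉ D)
    (hLs : ExpansionVisits U D d M Ls) {h : ℕ → List ℕ} {k N : ℕ}
    (hflat : Ls.flatten = (List.range (k + 1)).map h) (hNk : N ≤ k)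
    (hconst : ∀ i, N ≤ i → expansionIndex U M d lam (h i) = expansionIndex U M d lam (h N))
    (hlt : ∀ i < N, expansionIndex U M d lam (h i) < expansionIndex U M d lam (h N)) :
    DVisit U (D ++ [d]) (h N) ((List.range (k + 1 - N)).map (fun i => h (N + i))) := by
  rcases Ls.eq_nil_or_concat with rfl | ⟨P, last, rfl⟩
  · simp at hflat
  obtain ⟨hidxP, hidxlast⟩ := hLs.expansionIndex_concat hM hd
  let jl : Fin (P.concat last).length := ⟨P.length, by simp⟩
  have hjl : (P.concat last).get jl = last := by simp [jl]
  rw [List.concat_eq_append, List.flatten_append, List.flatten_singleton] at hflat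
  obtain ⟨hP, hlast⟩ := List.eq_map_range_of_map_range_eq_append hflat.symm
  have hpk : P.flatten.length ≤ k := by
    have := List.length_pos_iff.mpr (hjl ▸ hLs.1 jl)
    rw [hlast, List.length_map, List.length_range] at this
    omega
  have hge : ∀ i, P.flatten.length ≤ i → i ≤ k →
      expansionIndex U M d lam (h i) = P.length :=
    fun i h₁ h₂ => hidxlast _ (hlast ▸ List.mem_map.mpr ⟨i - P.flatten.length,
      List.mem_range.mpr (by omega), by congr 1; omega⟩)
  -- the last sub-visit starts exactly where the index reaches its final value
  have hpN : P.flatten.length = N := by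
    rcases lt_trichotomy P.flatten.length N with h₁ | h₁ | h₁
    · have := hlt _ h₁
      rw [hge _ le_rfl hpk, hge N h₁.le hNk] at this
      omega
    · exact h₁
    · have := hidxP _ (hP ▸ List.mem_map.mpr ⟨N, by simpa using h₁, rfl⟩)
      rw [← hconst _ h₁.le, hge _ le_rfl hpk] at this
      omega
  rw [hpN] at hlast
  have hhead : last.headI = h N := by
    obtain ⟨m, hm⟩ : ∃ m, k + 1 - N = m + 1 := ⟨k - N, by omega⟩
    rw [hlast, hm, List.range_succ_eq_map]
    simp
  have hv := hLs.2.2 jl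
  rw [hjl, hhead] at hv
  rwa [hlast] at hv

theorem exists_enumerates (hM : DVisit U D lam M) (hd : d ∉ D) {h : ℕ → List ℕ}
    (hLs : ∀ k, ∃ Ls, Ls.flatten = (List.range (k + 1)).map h ∧ ExpansionVisits U D d M Ls) :
    ∃ N, Enumerates U (D ++ [d]) (h N) (fun i => h (N + i)) := by
  have hmono : Monotone fun i => expansionIndex U M d lam (h i) := by
    intro i j hij
    obtain ⟨Ls, hflat, hLsj⟩ := hLs j
    have hpw := List.pairwise_flatten_of_forall_mem_getElem (expansionIndex U M d lam)
      fun j hj x hx => hLsj.expansionIndex_eq hM hd ⟨j, hj⟩ (by simpa using hx)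
    rw [hflat, List.pairwise_map_range_iff] at hpw
    rcases hij.lt_or_eq with hij | rfl
    · exact hpw i j hij (by omega)
    · exact le_rfl
  have hbdd : BddAbove (Set.range fun i => expansionIndex U M d lam (h i)) :=
    ⟨M.length, by rintro _ ⟨i, rfl⟩; exact expansionIndex_le_length U M d lam (h i)⟩
  obtain ⟨N, hconst, hlt⟩ := Nat.exists_forall_ge_eq_of_monotone hmono hbdd
  refine ⟨N, fun m => ?_⟩
  obtain ⟨Ls, hflat, hLsk⟩ := hLs (N + m)
  have hv := hLsk.dVisit_tail hM hd hflat (Nat.le_add_right N m) hconst hlt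
  rwa [show N + m + 1 - N = m + 1 by omega] at hv

end ExpansionVisits

theorem DVisit.nodup_s7 {U : Set (List ℕ)} {E lam : List ℕ} {L : List (List ℕ)}
    (h : DVisit U E lam L) (hE : E.Nodup) : L.Nodup := by
  induction h with
  | base => simp
  | step d D lam M Ls hM _ hne hexp hpv _ ihM ihpv =>
    obtain ⟨hdD, hD⟩ := List.nodup_cons.mp hE
    have hLs : ExpansionVisits U D d M Ls := ⟨hne, hexp, hpv⟩
    have hDd : (D ++ [d]).Nodup := (List.perm_append_singleton d D).nodup_iff.mpr hE
    refine List.nodup_append.mpr ⟨ihM hD, List.nodup_flatten.mpr ⟨?_, ?_⟩, ?_⟩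
    · intro l hl
      obtain ⟨j, rfl⟩ := List.get_of_mem hl
      exact ihpv j hDd
    · rw [List.pairwise_iff_get]
      intro i j hij x hxi hxj
      refine hij.ne (Fin.ext ?_)
      rw [← hLs.expansionIndex_eq hM hdD i hxi, ← hLs.expansionIndex_eq hM hdD j hxj]
    · rintro x hx y hy rfl
      exact hM.not_mem_drop hdD hx (hLs.mem_drop hM hdD hy)

theorem Stable.of_shift {f : ℕ → List ℕ} {n : ℕ} {μ : List ℕ}
    (h : Stable (fun i => f (n + i)) μ) : Stable f μ := by
  obtain ⟨m, rfl, hm⟩ := h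
  refine ⟨n + m, rfl, fun n' hn' => ?_⟩
  have := hm (n' - n) (by omega)
  simp only at this ⊢
  rwa [show n + (n' - n) = n' by omega] at this

namespace Enumerates

variable {U : Set (List ℕ)} {E lam : List ℕ} {f : ℕ → List ℕ}

theorem not_nil : ¬ Enumerates U [] lam f := fun h => by
  simpa using congrArg List.length (h 1).eq_singleton_of_nil

theorem injective (h : Enumerates U E lam f) (hE : E.Nodup) : Function.Injective f :=
  fun a b hab => List.inj_on_of_nodup_map ((h (max a b)).nodup_s7 hE)
    (List.mem_range.mpr (by omega)) (List.mem_range.mpr (by omega)) hab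

theorem stable_of_shift {n : ℕ} (h : Enumerates U E (f n) (fun i => f (n + i)))
    (hinj : Function.Injective f) : Stable f (f n) := by
  refine ⟨n, rfl, fun n' hn' => ⟨?_, fun heq => hn'.ne (hinj heq)⟩⟩
  refine (h (n' - n)).prefix_of_mem_s7 (List.mem_map.mpr ⟨n' - n, ?_, ?_⟩)
  · simp
  · show f (n + (n' - n)) = f n'
    congr 1
    omega

theorem of_cons {d : ℕ} {D : List ℕ} (h : Enumerates U (d :: D) lam f) (hd : d ∉ D)
    (hf : ∀ n, d ∉ (f n).drop lam.length) : Enumerates U D lam f := by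
  intro m
  obtain ⟨M, Ls, hL, hM, hLs⟩ := (h m).exists_decomp_of_cons
  have hnil : Ls.flatten = [] := List.eq_nil_iff_forall_not_mem.mpr fun x hx => by
    obtain ⟨n, -, rfl⟩ := List.mem_map.mp (hL ▸ List.mem_append_right M hx)
    exact hf n (hLs.mem_drop hM hd hx)
  rwa [hL, hnil, List.append_nil]

theorem exists_expansionVisits {d : ℕ} {D : List ℕ} (h : Enumerates U (d :: D) lam f)
    (hd : d ∉ D) {t : ℕ} (ht : d ∈ (f t).drop lam.length)
    (hmin : ∀ n < t, d ∉ (f n).drop lam.length) (k : ℕ) :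
    DVisit U D lam ((List.range t).map f) ∧ ∃ Ls, Ls.flatten =
      (List.range (k + 1)).map (fun i => f (t + i)) ∧
        ExpansionVisits U D d ((List.range t).map f) Ls := by
  obtain ⟨M, Ls, hL, hM, hLs⟩ := (h (t + k)).exists_decomp_of_cons
  obtain ⟨hMeq, hLseq⟩ := List.eq_map_range_of_map_range_eq_append hL
  have hMt : M.length = t := by
    rcases lt_trichotomy M.length t with hlt | heq | hgt
    · refine absurd (hLs.mem_drop hM hd ?_) (hmin _ hlt)
      rw [hLseq]
      exact List.mem_map.mpr ⟨0, List.mem_range.mpr (by omega), by simp⟩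
    · exact heq
    · refine absurd ht (hM.not_mem_drop hd ?_)
      rw [hMeq]
      exact List.mem_map.mpr ⟨t, List.mem_range.mpr hgt, rfl⟩
  rw [hMt] at hMeq hLseq
  refine ⟨hMeq ▸ hM, Ls, ?_, hMeq ▸ hLs⟩
  rw [hLseq, show t + k + 1 - t = k + 1 by omega]

theorem exists_tail (h : Enumerates U E lam f) (hE : E.Nodup) :
    ∃ n, 0 < n ∧ ∃ E', E'.Nodup ∧ Enumerates U E' (f n) (fun i => f (n + i)) := by
  induction E generalizing lam f with
  | nil => exact absurd h not_nil
  | cons d D ih =>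
    obtain ⟨hdD, hD⟩ := List.nodup_cons.mp hE
    by_cases hB : ∃ n, d ∈ (f n).drop lam.length
    · classical
      have hdecomp := h.exists_expansionVisits hdD (Nat.find_spec hB)
        fun n hn => Nat.find_min hB hn
      have ht : Nat.find hB ≠ 0 := by simpa using (hdecomp 0).1.ne_nil
      obtain ⟨N, hN⟩ := ExpansionVisits.exists_enumerates (hdecomp 0).1 hdD
        fun k => (hdecomp k).2
      refine ⟨Nat.find hB + N, by omega, D ++ [d],
        (List.perm_append_singleton d D).nodup_iff.mpr hE, ?_⟩
      simpa only [add_assoc] using hN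
    · simp only [not_exists] at hB
      exact ih (h.of_cons hdD hB) hD

theorem exists_stable_gt (h : Enumerates U E lam f) (hE : E.Nodup) (q : ℕ) :
    ∃ n, q < n ∧ Stable f (f n) := by
  induction q using Nat.strong_induction_on generalizing E lam f with
  | _ q ih =>
  obtain ⟨n, hn, E', hE', htail⟩ := h.exists_tail hE
  by_cases hq : q < n
  · exact ⟨n, hq, htail.stable_of_shift (h.injective hE)⟩
  · obtain ⟨i, hi, hst⟩ := ih (q - n) (by omega) htail hE'
    exact ⟨n + i, by omega, hst.of_shift⟩

end Enumerates

theorem stable_unbounded_general (U : Set (List ℕ))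
    (D : List ℕ) (hDnd : D.Nodup)
    (lam : List ℕ)
    (f : ℕ → List ℕ) (hf : Enumerates U D lam f) :
    (∀ m : ℕ, Stable f (f m) → ∃ n, m < n ∧ Stable f (f n)) ∧
      (∀ q : ℕ, ∃ n, q < n ∧ Stable f (f n)) :=
  ⟨fun m _ => hf.exists_stable_gt hDnd m, hf.exists_stable_gt hDnd⟩

/-- after every stable node of the complete D-visit there is another
stable node; consequently there are infinitely many stable nodes. -/
theorem stable_unbounded (k : ℕ) (U : Set (List ℕ)) (hU : IsKTree k U)
    (D : List ℕ) (hDnd : D.Nodup) (hDk : ∀ d ∈ D, d < k)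
    (lam : List ℕ) (hlam : lam ∈ U)
    (hinf : (subtreeD U D lam).Infinite)
    (f : ℕ → List ℕ) (hf : Enumerates U D lam f) :
    (∀ m : ℕ, Stable f (f m) → ∃ n, m < n ∧ Stable f (f n)) ∧
      (∀ q : ℕ, ∃ n, q < n ∧ Stable f (f n)) :=
  stable_unbounded_general U D hDnd lam f hf
end

section
/- Let f: [ℕ]² → k be a coloring and let ≺_E be the Erdős ordering defined by: y is an ≺_E-child of x iff x < y and for all z < x with z ≺_E x, f({z,x}) = f({z,y}), taking the least such x. Then (ℕ, ≺_E) is a tree, and it is an Erdős tree: for every node x and every i < k, all ≺_E-descendants y, z of the i-th child of x satisfy f({x,y}) = f({x,z}) = the color of the edge from x to that child. -/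
/-- The Erdős ancestor ordering associated to a coloring `c` of pairs:
`erdosAnc c x y` iff `x < y` and every `≺_E`-ancestor `z` of `x` colors the
edges to `x` and to `y` alike. -/
def erdosAnc (c : ℕ → ℕ → ℕ) (x y : ℕ) : Prop :=
  x < y ∧ ∀ z, z < x → erdosAnc c z x → c z x = c z y
termination_by x

/-- `y` is a child of `x` in the Erdős tree: an ancestor with nothing in between. -/
def erdosChild (c : ℕ → ℕ → ℕ) (x y : ℕ) : Prop :=
  erdosAnc c x y ∧ ∀ w, ¬(erdosAnc c x w ∧ erdosAnc c w y)

/-! Both tree axioms are proved by strong induction on the smaller node: whether `z ≺_E x` only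
depends on the ancestors of `z`, which are below `z`. The Erdős property is then the defining
clause of `≺_E` read at the descendant, with `x` as the ancestor. -/

namespace erdosAnc

variable {c : ℕ → ℕ → ℕ} {w x y z : ℕ}

lemma iff : erdosAnc c x y ↔ x < y ∧ ∀ z, z < x → erdosAnc c z x → c z x = c z y := by
  rw [erdosAnc]

lemma lt (h : erdosAnc c x y) : x < y := (iff.mp h).1

lemma color_eq (hzx : erdosAnc c z x) (hxy : erdosAnc c x y) : c z x = c z y :=
  (iff.mp hxy).2 z hzx.lt hzx

lemma zero_of_pos (c : ℕ → ℕ → ℕ) (hy : 0 < y) : erdosAnc c 0 y :=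
  iff.mpr ⟨hy, fun z hz _ => absurd hz (Nat.not_lt_zero z)⟩

lemma trans (hxy : erdosAnc c x y) (hyz : erdosAnc c y z) : erdosAnc c x z := by
  induction x using Nat.strong_induction_on generalizing y z with
  | _ x ih =>
    refine iff.mpr ⟨hxy.lt.trans hyz.lt, fun w _ hwx => ?_⟩
    have hwy : erdosAnc c w y := ih w hwx.lt hwx hxy
    exact (hwx.color_eq hxy).trans (hwy.color_eq hyz)

lemma of_common_desc (h₁ : erdosAnc c x y) (h₂ : erdosAnc c z y) (hlt : x < z) :
    erdosAnc c x z := by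
  induction x using Nat.strong_induction_on generalizing z with
  | _ x ih =>
    refine iff.mpr ⟨hlt, fun w _ hwx => ?_⟩
    have hwz : erdosAnc c w z := ih w hwx.lt (hwx.trans h₁) h₂ (hwx.lt.trans hlt)
    exact (hwx.color_eq h₁).trans (hwz.color_eq h₂).symm

lemma color_eq_of_eq_or (hxw : erdosAnc c x w) (hwy : w = y ∨ erdosAnc c w y) :
    c x y = c x w := by
  rcases hwy with rfl | hwy
  · rfl
  · exact (hxw.color_eq hwy).symm

end erdosAnc

theorem erdos_ordering_tree_general (c : ℕ → ℕ → ℕ) :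
    (∀ x y z, erdosAnc c x y → erdosAnc c y z → erdosAnc c x z) ∧
    (∀ y x₁ x₂, erdosAnc c x₁ y → erdosAnc c x₂ y →
      x₁ = x₂ ∨ erdosAnc c x₁ x₂ ∨ erdosAnc c x₂ x₁) ∧
    (∀ y, 0 < y → erdosAnc c 0 y) ∧
    (∀ x w y z, erdosChild c x w →
      (w = y ∨ erdosAnc c w y) → (w = z ∨ erdosAnc c w z) →
      c x y = c x w ∧ c x z = c x w) := by
  refine ⟨fun _ _ _ => erdosAnc.trans, ?_, fun _ => erdosAnc.zero_of_pos c, ?_⟩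
  · intro y x₁ x₂ h₁ h₂
    rcases lt_trichotomy x₁ x₂ with h | h | h
    · exact Or.inr (Or.inl (h₁.of_common_desc h₂ h))
    · exact Or.inl h
    · exact Or.inr (Or.inr (h₂.of_common_desc h₁ h))
  · intro x w y z hchild hy hz
    exact ⟨hchild.1.color_eq_of_eq_or hy, hchild.1.color_eq_of_eq_or hz⟩

/-- (ℕ, erdosAnc c) is a tree (transitive, ancestors of a node linearly
ordered, rooted at 0) and it is an Erdős tree: all edges from x to descendants
of the same child of x get the same color as the edge to that child. -/
theorem erdos_ordering_tree (k : ℕ) (hk : 2 ≤ k) (c : ℕ → ℕ → ℕ)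
    (hsym : ∀ x y, c x y = c y x) (hval : ∀ x y, c x y < k) :
    (∀ x y z, erdosAnc c x y → erdosAnc c y z → erdosAnc c x z) ∧
    (∀ y x₁ x₂, erdosAnc c x₁ y → erdosAnc c x₂ y →
      x₁ = x₂ ∨ erdosAnc c x₁ x₂ ∨ erdosAnc c x₂ x₁) ∧
    (∀ y, 0 < y → erdosAnc c 0 y) ∧
    (∀ x w y z, erdosChild c x w →
      (w = y ∨ erdosAnc c w y) → (w = z ∨ erdosAnc c w z) →
      c x y = c x w ∧ c x z = c x w) :=
  erdos_ordering_tree_general c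
end

section
/- If r is an infinite branch of an Erdős tree for a coloring f: [ℕ]² → k, and x ∈ r has some descendant y ∈ r with f({x,y}) = h, then for every descendant z ∈ r of x, f({x,z}) = h. Consequently, r induces a 1-coloring of its nodes (color each x ∈ r by the color of edges from x to its descendants in r), and any infinite monochromatic set of nodes of r under this 1-coloring is an infinite homogeneous set for f. -/
section ErdosTree

variable {α β : Type*} {c : α → α → β} {anc : α → α → Prop}

theorem color_eq_of_comparable_descendants
    (herdos : ∀ x w y, anc x w → anc w y → c x w = c x y) {x y z : α}
    (hy : anc x y) (hz : anc x z) (hyz : y = z ∨ anc y z ∨ anc z y) :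
    c x y = c x z := by
  rcases hyz with rfl | hyz | hzy
  · rfl
  · exact herdos x y z hy hyz
  · exact (herdos x z y hz hzy).symm

theorem color_eq_of_comparable_of_forall_descendant (hsym : ∀ x y, c x y = c y x)
    {H r : Set α} (hHr : H ⊆ r) {h : β} (hmono : ∀ x ∈ H, ∀ y ∈ r, anc x y → c x y = h)
    {x y : α} (hx : x ∈ H) (hy : y ∈ H) (hne : x ≠ y) (hxy : x = y ∨ anc x y ∨ anc y x) :
    c x y = h := by
  rcases hxy with rfl | hxy | hyx
  · exact absurd rfl hne
  · exact hmono x hx y (hHr hy) hxy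
  · rw [hsym]
    exact hmono y hy x (hHr hx) hyx

end ErdosTree

theorem erdos_branch_one_coloring_general (c : ℕ → ℕ → ℕ)
    (hsym : ∀ x y, c x y = c y x)
    (anc : ℕ → ℕ → Prop)
    (herdos : ∀ x w y, anc x w → anc w y → c x w = c x y)
    (r : Set ℕ) (hchain : ∀ x ∈ r, ∀ y ∈ r, x = y ∨ anc x y ∨ anc y x) :
    (∀ x ∈ r, ∀ (h : ℕ), ∀ y ∈ r, anc x y → c x y = h →
      ∀ z ∈ r, anc x z → c x z = h) ∧
    (∀ H : Set ℕ, H ⊆ r → H.Infinite → ∀ h : ℕ,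
      (∀ x ∈ H, ∀ y ∈ r, anc x y → c x y = h) →
      ∀ x ∈ H, ∀ y ∈ H, x ≠ y → c x y = h) := by
  refine ⟨fun x _ h y hy hxy hcy z hz hxz => ?_, fun H hHr _ h hmono x hx y hy hne => ?_⟩
  · rw [← hcy]
    exact (color_eq_of_comparable_descendants herdos hxy hxz (hchain y hy z hz)).symm
  · exact color_eq_of_comparable_of_forall_descendant hsym hHr hmono hx hy hne
      (hchain x (hHr hx) y (hHr hy))

/-- on an infinite branch r of an Erdős tree for a coloring c, once a
node x of r has a descendant in r with edge color h, all its descendants in r give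
edge color h; hence r induces a 1-coloring of its nodes, and any infinite
monochromatic set of nodes of r under this 1-coloring is homogeneous for c. -/
theorem erdos_branch_one_coloring (k : ℕ) (hk : 2 ≤ k) (c : ℕ → ℕ → ℕ)
    (hsym : ∀ x y, c x y = c y x) (hval : ∀ x y, c x y < k)
    (anc : ℕ → ℕ → Prop) (hlt : ∀ x y, anc x y → x < y)
    (herdos : ∀ x w y, anc x w → anc w y → c x w = c x y)
    (r : Set ℕ) (hchain : ∀ x ∈ r, ∀ y ∈ r, x = y ∨ anc x y ∨ anc y x)
    (hinf : r.Infinite) :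
    (∀ x ∈ r, ∀ (h : ℕ), ∀ y ∈ r, anc x y → c x y = h →
      ∀ z ∈ r, anc x z → c x z = h) ∧
    (∀ H : Set ℕ, H ⊆ r → H.Infinite → ∀ h : ℕ,
      (∀ x ∈ H, ∀ y ∈ r, anc x y → c x y = h) →
      ∀ x ∈ H, ∀ y ∈ H, x ≠ y → c x y = h) :=
  erdos_branch_one_coloring_general c hsym anc herdos r hchain
end

section
/- If a recursive coloring c: [ℕ]² → k admits an Erdős tree T whose unique infinite branch r is Δ⁰₂-definable, then c has an infinite Δ⁰₂ homogeneous set; hence, since there exists a recursive 2-coloring of [ℕ]² with no infinite Σ⁰₂ homogeneous set (Jockusch), the unique infinite branch of the tree constructed from the complete visit is not in general Δ⁰₂. -/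
/-- T is Δ⁰₂: limit-computable (Shoenfield limit lemma). -/
def Delta2 (T : Set ℕ) : Prop :=
  ∃ g : ℕ → ℕ → Bool, Computable₂ g ∧
    ∀ x, ∃ N, ∀ n, N ≤ n → (g x n = true ↔ x ∈ T)

/-- An Erdős tree for the coloring c: a tree on a subset T of ℕ whose ancestor
relation anc refines <, with linearly ordered ancestors, such that all edges from
a node x to iterated descendants of the same child of x have the same c-color. -/
def IsErdosTree (c : ℕ → ℕ → ℕ) (T : Set ℕ) (anc : ℕ → ℕ → Prop) : Prop :=
  (∀ x y, anc x y → x ∈ T ∧ y ∈ T ∧ x < y) ∧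
  (∀ x y z, anc x y → anc y z → anc x z) ∧
  (∀ y x₁ x₂, anc x₁ y → anc x₂ y → x₁ = x₂ ∨ anc x₁ x₂ ∨ anc x₂ x₁) ∧
  (∀ x w y, anc x w → anc w y → c x w = c x y)

/-- r is an infinite branch of the tree (T, anc): an infinite chain, downward
closed under anc. -/
def IsInfBranchN (T : Set ℕ) (anc : ℕ → ℕ → Prop) (r : Set ℕ) : Prop :=
  r ⊆ T ∧ r.Infinite ∧ (∀ x ∈ r, ∀ y ∈ r, x = y ∨ anc x y ∨ anc y x) ∧
  (∀ y ∈ r, ∀ x, anc x y → x ∈ r)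

/-!
Along an infinite branch `r` of an Erdős tree, the colour `c x y` of `x < y` in `r` depends only on
`x`, so it equals `c x x⁺` with `x⁺` the next element of `r`. Some colour `h` is taken infinitely
often, and `{x ∈ r | c x x⁺ = h}` is homogeneous. It is Δ⁰₂ when `r` is: `x⁺` is the limit of the
least `y > x` currently guessed to lie in `r`, which is correct as soon as the guesses below `x⁺`
have settled.

For the second part we build, following Jockusch, a recursive 2-colouring with no infinite Δ⁰₂
homogeneous set. At stage `s`, the `e`-th requirement guesses the `e`-th Δ⁰₂ set `A` and colours
`{x, s}` with `0` or `1` according to whether `x` is guessed among the first `3 ^ e` or the next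
`3 ^ e` elements of `A`; a stronger requirement `d < e` takes precedence but claims at most
`2 * 3 ^ d` points, so fewer than `3 ^ e` in all. At a late stage `s ∈ A` the guesses about the
first `2 * 3 ^ e` elements of `A` are right, and both colours appear on pairs `{x, s}` with `x ∈ A`.
-/

open Filter

section BoundedSearch

variable {α : Type*} [Primcodable α] {p : α → ℕ → Bool}

theorem Computable₂.find?_range (hp : Computable₂ p) :
    Computable₂ fun a n => (List.range n).find? (p a) := by
  have : Computable fun q : α × ℕ => Nat.rec (motive := fun _ => Option ℕ) none
      (fun n o => Option.casesOn o (cond (p q.1 n) (some n) none) some) q.2 :=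
    Computable.nat_rec .snd (.const none) <|
      (Computable.option_casesOn (Computable.snd.comp .snd)
        (Computable.cond (hp.comp (Computable.fst.comp .fst) (Computable.fst.comp .snd))
          (Computable.option_some.comp (Computable.fst.comp .snd)) (.const none))
        (Computable.option_some.comp .snd).to₂).to₂
  refine Computable₂.mk (this.of_eq fun ⟨a, n⟩ => ?_)
  dsimp only
  induction n with
  | zero => rfl
  | succ n ih =>
    rw [List.range_succ, List.find?_append]
    change Option.casesOn (motive := fun _ => Option ℕ)
      (Nat.rec (motive := fun _ => Option ℕ) none _ n) _ _ = _
    rw [ih]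
    cases List.find? (p a) (List.range n) <;> cases hpn : p a n <;> simp [hpn]

theorem Computable₂.count (hp : Computable₂ p) :
    Computable₂ fun a n => Nat.count (p a ·) n := by
  have : Computable fun q : α × ℕ => Nat.rec (motive := fun _ => ℕ) 0
      (fun n k => k + cond (p q.1 n) 1 0) q.2 :=
    Computable.nat_rec .snd (.const 0) <|
      (Primrec.nat_add.to_comp.comp (Computable.snd.comp .snd)
        (Computable.cond (hp.comp (Computable.fst.comp .fst) (Computable.fst.comp .snd))
          (.const 1) (.const 0))).to₂
  refine Computable₂.mk (this.of_eq fun ⟨a, n⟩ => ?_)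
  dsimp only
  induction n with
  | zero => rfl
  | succ n ih => rw [Nat.count_succ, ← ih]; cases hpn : p a n <;> simp [hpn]

end BoundedSearch

theorem Primrec.nat_pow : Primrec₂ ((· ^ ·) : ℕ → ℕ → ℕ) :=
  Primrec₂.unpaired'.1 Nat.Primrec.pow

theorem delta2_iff {H : Set ℕ} : Delta2 H ↔ ∃ g : ℕ → ℕ → Bool, Computable₂ g ∧
    ∀ x, ∀ᶠ n in atTop, (g x n = true ↔ x ∈ H) := by
  simp only [Delta2, eventually_atTop]

theorem Set.Infinite.exists_infinite_fiber_lt {α : Type*} {s : Set α} (hs : s.Infinite)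
    {f : α → ℕ} {k : ℕ} (hf : ∀ x ∈ s, f x < k) : ∃ h < k, {x | x ∈ s ∧ f x = h}.Infinite := by
  by_contra! hfin
  refine hs (((Finset.range k).finite_toSet.biUnion fun h hh => hfin h ?_).subset fun x hx => ?_)
  · exact Finset.mem_range.1 hh
  · exact Set.mem_biUnion (Finset.mem_range.2 (hf x hx)) ⟨hx, rfl⟩

section NextAbove

variable {r : Set ℕ} (hr : r.Infinite)

open Classical in
noncomputable def nextAbove (x : ℕ) : ℕ := Nat.find (hr.exists_gt x)

theorem nextAbove_mem (x : ℕ) : nextAbove hr x ∈ r := by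
  classical exact (Nat.find_spec (hr.exists_gt x)).1

theorem lt_nextAbove (x : ℕ) : x < nextAbove hr x := by
  classical exact (Nat.find_spec (hr.exists_gt x)).2

theorem notMem_of_lt_nextAbove {x y : ℕ} (hxy : x < y) (hy : y < nextAbove hr x) : y ∉ r := by
  classical exact fun hyr => Nat.find_min (hr.exists_gt x) hy ⟨hyr, hxy⟩

theorem Delta2.sep_nextAbove (hd : Delta2 r) {P : ℕ → ℕ → Bool} (hP : Computable₂ P) :
    Delta2 {x | x ∈ r ∧ P x (nextAbove hr x) = true} := by
  obtain ⟨g, hg, hlim⟩ := delta2_iff.1 hd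
  refine delta2_iff.2 ⟨fun x n => g x n &&
    ((List.range n).find? fun y => decide (x < y) && g y n).any (P x), ?_, fun x => ?_⟩
  · have hsearch : Computable₂ fun (q : ℕ × ℕ) y => decide (q.1 < y) && g y q.2 :=
      (Primrec.and.to_comp.comp
        (Primrec.nat_lt.decide.to_comp.comp (Computable.fst.comp .fst) .snd)
        (hg.comp .snd (Computable.snd.comp .fst))).to₂
    have hany : Computable fun q : ℕ × ℕ =>
        ((List.range q.2).find? fun y => decide (q.1 < y) && g y q.2).any (P q.1) :=
      (Computable.option_casesOn ((Computable₂.find?_range hsearch).comp .id .snd)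
        (.const false) (hP.comp (Computable.fst.comp .fst) .snd).to₂).of_eq fun q => by
          dsimp only [id]
          cases (List.range q.2).find? fun y => decide (q.1 < y) && g y q.2 <;> rfl
    exact (Primrec.and.to_comp.comp hg hany).to₂
  · have hsettled : ∀ᶠ n in atTop, ∀ y ∈ Set.Iic (nextAbove hr x), (g y n = true ↔ y ∈ r) :=
      (eventually_all_finite (Set.finite_Iic _)).2 fun y _ => hlim y
    filter_upwards [hsettled, eventually_gt_atTop (nextAbove hr x)] with n hn hlt
    have hfind : ((List.range n).find? fun y => decide (x < y) && g y n) =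
        some (nextAbove hr x) := by
      rw [List.find?_range_eq_some]
      refine ⟨?_, List.mem_range.2 hlt, fun y hy => ?_⟩
      · simp [lt_nextAbove, (hn _ (Set.mem_Iic.2 le_rfl)).2 (nextAbove_mem hr x)]
      · by_cases hxy : x < y
        · have := (hn y (Set.mem_Iic.2 hy.le)).not.2 (notMem_of_lt_nextAbove hr hxy hy)
          simp_all
        · simp [hxy]
    simp [hfind, hn x (lt_nextAbove hr x).le]

end NextAbove

theorem exists_delta2_homogeneous_of_forall_color_eq {k : ℕ} {c : ℕ → ℕ → ℕ}
    (hc : Computable₂ c) (hsym : ∀ x y, c x y = c y x) (hlt : ∀ x y, c x y < k) {r : Set ℕ}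
    (hd : Delta2 r) (hr : r.Infinite)
    (hcol : ∀ x ∈ r, ∀ y ∈ r, ∀ z ∈ r, x < y → x < z → c x y = c x z) :
    ∃ H : Set ℕ, Delta2 H ∧ H.Infinite ∧ ∃ h < k, ∀ x ∈ H, ∀ y ∈ H, x ≠ y → c x y = h := by
  obtain ⟨h, hhk, hinf⟩ :=
    hr.exists_infinite_fiber_lt (f := fun x => c x (nextAbove hr x)) fun x _ => hlt _ _
  set H := {x | x ∈ r ∧ c x (nextAbove hr x) = h}
  have hH : ∀ x ∈ H, ∀ y ∈ H, x < y → c x y = h := fun x hx y hy hxy => by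
    rw [hcol x hx.1 y hy.1 _ (nextAbove_mem hr x) hxy (lt_nextAbove hr x), hx.2]
  refine ⟨H, ?_, hinf, h, hhk, fun x hx y hy hne => ?_⟩
  · simpa using hd.sep_nextAbove hr (P := fun x y => decide (c x y = h))
      (Primrec.eq.decide.to_comp.comp hc (.const h)).to₂
  · rcases hne.lt_or_gt with hxy | hyx
    · exact hH x hx y hy hxy
    · rw [hsym]
      exact hH y hy x hx hyx

section ErdosTree

variable {c : ℕ → ℕ → ℕ} {T : Set ℕ} {anc : ℕ → ℕ → Prop} {r : Set ℕ}

theorem IsInfBranchN.anc_of_lt (hT : IsErdosTree c T anc) (hB : IsInfBranchN T anc r)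
    {x y : ℕ} (hx : x ∈ r) (hy : y ∈ r) (hxy : x < y) : anc x y := by
  rcases hB.2.2.1 x hx y hy with rfl | h | h
  · exact absurd hxy (lt_irrefl x)
  · exact h
  · exact absurd (hT.1 y x h).2.2 hxy.not_gt

theorem IsInfBranchN.color_eq (hT : IsErdosTree c T anc) (hB : IsInfBranchN T anc r)
    {x y z : ℕ} (hx : x ∈ r) (hy : y ∈ r) (hz : z ∈ r) (hxy : x < y) (hxz : x < z) :
    c x y = c x z := by
  rcases lt_trichotomy y z with hyz | rfl | hzy
  · exact hT.2.2.2 x y z (hB.anc_of_lt hT hx hy hxy) (hB.anc_of_lt hT hy hz hyz)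
  · rfl
  · exact (hT.2.2.2 x z y (hB.anc_of_lt hT hx hz hxz) (hB.anc_of_lt hT hz hy hzy)).symm

theorem IsInfBranchN.exists_delta2_homogeneous {k : ℕ} (hc : Computable₂ c)
    (hsym : ∀ x y, c x y = c y x) (hlt : ∀ x y, c x y < k) (hT : IsErdosTree c T anc)
    (hB : IsInfBranchN T anc r) (hd : Delta2 r) :
    ∃ H : Set ℕ, Delta2 H ∧ H.Infinite ∧ ∃ h < k, ∀ x ∈ H, ∀ y ∈ H, x ≠ y → c x y = h :=
  exists_delta2_homogeneous_of_forall_color_eq hc hsym hlt hd hB.2.1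
    fun _ hx _ hy _ hz => hB.color_eq hT hx hy hz

end ErdosTree

namespace Jockusch

open Nat.Partrec (Code)
open Finset

def lastHalt (c : Code) (x s : ℕ) : ℕ :=
  Nat.findGreatest (fun t => (c.evaln s (x.pair t)).isSome) s

/-- The `e`-th program, read as a function of `⟨x, t⟩`, is run for `s` steps on every `t ≤ s`; the
guess is whether its output at the latest `t` that halted is `1`. For a program computing an
approximation `g` of a Δ⁰₂ set these guesses converge to the set, even though the running time
of `g x t` may grow faster than `t`. -/
def guess (e x s : ℕ) : Bool :=
  let c := Denumerable.ofNat Code e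
  decide (c.evaln s (x.pair (lastHalt c x s)) = some 1)

def rank (e x s : ℕ) : ℕ := Nat.count (guess e · s) x

def claims (e x s : ℕ) : Bool := guess e x s && decide (rank e x s < 2 * 3 ^ e)

/-- The colour of `{x, s}` for `x < s`, chosen by the strongest requirement claiming `x`. -/
def stageColor (x s : ℕ) : ℕ :=
  ((List.range s).find? (claims · x s)).elim 0 fun e => bif rank e x s < 3 ^ e then 0 else 1

def coloring (x y : ℕ) : ℕ := bif x < y then stageColor x y else stageColor y x

theorem primrec_guess : Primrec fun q : ℕ × ℕ × ℕ => guess q.1 q.2.1 q.2.2 := by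
  have hcode : Primrec fun q : ℕ × ℕ × ℕ => Denumerable.ofNat Code q.1 :=
    (Primrec.ofNat Code).comp .fst
  have heval : Primrec₂ fun (q : ℕ × ℕ × ℕ) t =>
      (Denumerable.ofNat Code q.1).evaln q.2.2 (q.2.1.pair t) :=
    Nat.Partrec.Code.primrec_evaln.comp
      (((Primrec.snd.comp (Primrec.snd.comp .fst)).pair (hcode.comp .fst)).pair
        (Primrec₂.natPair.comp (Primrec.fst.comp (Primrec.snd.comp .fst)) .snd))
  have hlast : Primrec fun q : ℕ × ℕ × ℕ =>
      lastHalt (Denumerable.ofNat Code q.1) q.2.1 q.2.2 :=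
    Primrec.nat_findGreatest (Primrec.snd.comp .snd)
      (Primrec.eq.comp (Primrec.option_isSome.comp heval) (.const true))
  exact Primrec.eq.decide.comp (heval.comp .id hlast) (.const (some 1))

theorem computable_rank : Computable fun q : ℕ × ℕ × ℕ => rank q.1 q.2.1 q.2.2 := by
  have hguess : Computable fun u : (ℕ × ℕ) × ℕ => guess u.1.1 u.2 u.1.2 :=
    primrec_guess.to_comp.comp (g := fun u : (ℕ × ℕ) × ℕ => (u.1.1, u.2, u.1.2))
      ((Computable.fst.comp .fst).pair (Computable.snd.pair (Computable.snd.comp .fst)))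
  exact (Computable₂.count hguess.to₂).comp (g := fun q : ℕ × ℕ × ℕ => (q.1, q.2.2))
    (h := fun q => q.2.1) (Computable.fst.pair (Computable.snd.comp .snd))
    (Computable.fst.comp .snd)

theorem computable_claims : Computable fun q : ℕ × ℕ × ℕ => claims q.1 q.2.1 q.2.2 :=
  Primrec.and.to_comp.comp primrec_guess.to_comp <|
    Primrec.nat_lt.decide.to_comp.comp computable_rank <|
      Primrec.nat_mul.to_comp.comp (.const 2)
        (Primrec.nat_pow.to_comp.comp (.const 3) .fst)

theorem computable₂_stageColor : Computable₂ stageColor := by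
  let perm (u : (ℕ × ℕ) × ℕ) : ℕ × ℕ × ℕ := (u.2, u.1.1, u.1.2)
  have hperm : Computable perm :=
    Computable.snd.pair ((Computable.fst.comp .fst).pair (Computable.snd.comp .fst))
  have hclaims : Computable₂ fun (q : ℕ × ℕ) e => claims e q.1 q.2 :=
    computable_claims.comp (g := perm) hperm
  have hcolor : Computable₂ fun (q : ℕ × ℕ) e => bif rank e q.1 q.2 < 3 ^ e then 0 else 1 :=
    Computable.cond (Primrec.nat_lt.decide.to_comp.comp (computable_rank.comp (g := perm) hperm)
      (Primrec.nat_pow.to_comp.comp (.const 3) .snd)) (.const 0) (.const 1)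
  refine Computable₂.mk ((Computable.option_casesOn
    ((Computable₂.find?_range hclaims).comp .id .snd) (.const 0) hcolor).of_eq fun q => ?_)
  dsimp only [id, stageColor]
  cases (List.range q.2).find? (claims · q.1 q.2) <;> rfl

theorem computable₂_coloring : Computable₂ coloring :=
  (Computable.cond (Primrec.nat_lt.decide.to_comp.comp .fst .snd)
    (computable₂_stageColor.comp .fst .snd) (computable₂_stageColor.comp .snd .fst)).to₂

theorem stageColor_lt_two (x s : ℕ) : stageColor x s < 2 := by
  unfold stageColor
  cases (List.range s).find? (claims · x s) with
  | none => exact Nat.zero_lt_two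
  | some e =>
    show (bif rank e x s < 3 ^ e then 0 else 1) < 2
    cases decide (rank e x s < 3 ^ e) <;> simp

theorem coloring_lt_two (x y : ℕ) : coloring x y < 2 := by
  unfold coloring
  cases decide (x < y) <;> exact stageColor_lt_two _ _

theorem coloring_comm (x y : ℕ) : coloring x y = coloring y x := by
  rcases lt_trichotomy x y with hxy | rfl | hyx
  · simp [coloring, hxy, hxy.not_gt]
  · rfl
  · simp [coloring, hyx, hyx.not_gt]

theorem le_lastHalt {c : Code} {x s t : ℕ} (hts : t ≤ s) (ht : (c.evaln s (x.pair t)).isSome) :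
    t ≤ lastHalt c x s :=
  Nat.le_findGreatest hts ht

theorem isSome_evaln_lastHalt {c : Code} {x s t : ℕ} (hts : t ≤ s)
    (ht : (c.evaln s (x.pair t)).isSome) : (c.evaln s (x.pair (lastHalt c x s))).isSome :=
  Nat.findGreatest_spec (P := fun t => (c.evaln s (x.pair t)).isSome) hts ht

theorem exists_guess_eventually {H : Set ℕ} (hH : Delta2 H) :
    ∃ e, ∀ x, ∀ᶠ s in atTop, (guess e x s = true ↔ x ∈ H) := by
  obtain ⟨g, hg, hlim⟩ := delta2_iff.1 hH
  obtain ⟨c, hc⟩ : ∃ c : Code, ∀ x n, c.eval (x.pair n) = Part.some (cond (g x n) 1 0) := by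
    have hF : Computable fun n : ℕ => cond (g n.unpair.1 n.unpair.2) 1 0 :=
      Computable.cond (hg.comp (Computable.fst.comp .unpair) (Computable.snd.comp .unpair))
        (.const 1) (.const 0)
    obtain ⟨c, hc⟩ := Nat.Partrec.Code.exists_code.1 (Partrec.nat_iff.1 hF)
    exact ⟨c, fun x n => by simp [hc]⟩
  refine ⟨Encodable.encode c, fun x => ?_⟩
  obtain ⟨N, hN⟩ := eventually_atTop.1 (hlim x)
  obtain ⟨k, hk⟩ := Code.evaln_complete.1 ((hc x N).symm ▸ Part.mem_some _)
  filter_upwards [eventually_ge_atTop (max k N)] with s hs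
  have hNs : N ≤ s := le_of_max_le_right hs
  have hhalt : (c.evaln s (x.pair N)).isSome :=
    Option.isSome_iff_exists.2 ⟨_, Code.evaln_mono (le_of_max_le_left hs) hk⟩
  obtain ⟨v, hv⟩ := Option.isSome_iff_exists.1 (isSome_evaln_lastHalt hNs hhalt)
  have hvt : v = cond (g x (lastHalt c x s)) 1 0 := by
    simpa [hc] using Code.evaln_sound hv
  simp only [guess, Denumerable.ofNat_encode, hv, hvt, ← hN _ (le_lastHalt hNs hhalt)]
  cases g x (lastHalt c x s) <;> simp

theorem stageColor_eq_of_least_claims {e x s : ℕ} (hes : e < s) (he : claims e x s = true)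
    (hmin : ∀ d < e, claims d x s = false) :
    stageColor x s = bif rank e x s < 3 ^ e then 0 else 1 := by
  have hfind : (List.range s).find? (claims · x s) = some e :=
    List.find?_range_eq_some.2 ⟨he, List.mem_range.2 hes, fun d hd => by simp [hmin d hd]⟩
  simp [stageColor, hfind]

theorem card_filter_claims_le (d s : ℕ) (S : Finset ℕ) :
    #{x ∈ S | claims d x s} ≤ 2 * 3 ^ d := by
  have hclaims : ∀ x ∈ ({x ∈ S | claims d x s} : Finset ℕ),
      guess d x s = true ∧ rank d x s < 2 * 3 ^ d := fun x hx => by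
    simpa [claims] using (mem_filter.1 hx).2
  calc #{x ∈ S | claims d x s} ≤ #(range (2 * 3 ^ d)) :=
        card_le_card_of_injOn (rank d · s) (fun x hx => mem_range.2 (hclaims x hx).2)
          fun x hx y hy hxy => Nat.count_injective (hclaims x hx).1 (hclaims y hy).1 hxy
    _ = 2 * 3 ^ d := card_range _

theorem card_filter_exists_claims_lt (e s : ℕ) (S : Finset ℕ) :
    #{x ∈ S | ∃ d < e, claims d x s} < 3 ^ e := by
  calc #{x ∈ S | ∃ d < e, claims d x s}
      ≤ #((range e).biUnion fun d => {x ∈ S | claims d x s}) := card_le_card fun x hx => by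
        obtain ⟨hxS, d, hd, hdx⟩ := mem_filter.1 hx
        exact mem_biUnion.2 ⟨d, mem_range.2 hd, mem_filter.2 ⟨hxS, hdx⟩⟩
    _ ≤ ∑ d ∈ range e, 2 * 3 ^ d :=
        card_biUnion_le.trans (sum_le_sum fun d _ => card_filter_claims_le d s S)
    _ < 3 ^ e := by
        have := geom_sum_mul_add 2 e
        norm_num at this
        rw [← mul_sum]
        omega

theorem exists_forall_not_claims (s : ℕ) {e : ℕ} {S : Finset ℕ} (hS : 3 ^ e ≤ #S) :
    ∃ x ∈ S, ∀ d < e, claims d x s = false := by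
  by_contra! h
  have hall : ({x ∈ S | ∃ d < e, claims d x s} : Finset ℕ) = S :=
    filter_true_of_mem fun x hx => by simpa using h x hx
  have := card_filter_exists_claims_lt e s S
  rw [hall] at this
  omega

theorem guess_nth_and_rank_nth {H : Set ℕ} (hinf : H.Infinite) {e z m : ℕ}
    (hguess : ∀ y ≤ Nat.nth (· ∈ H) m, (guess e y z = true ↔ y ∈ H)) {i : ℕ} (hi : i ≤ m) :
    guess e (Nat.nth (· ∈ H) i) z = true ∧ rank e (Nat.nth (· ∈ H) i) z = i := by
  classical
  have hle : Nat.nth (· ∈ H) i ≤ Nat.nth (· ∈ H) m := Nat.nth_monotone (p := (· ∈ H)) hinf hi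
  refine ⟨(hguess _ hle).2 (Nat.nth_mem_of_infinite (p := (· ∈ H)) hinf i), ?_⟩
  have hcount : rank e (Nat.nth (· ∈ H) i) z = Nat.count (· ∈ H) (Nat.nth (· ∈ H) i) :=
    le_antisymm (Nat.count_mono_left fun y hy => (hguess y (by omega)).1)
      (Nat.count_mono_left fun y hy => (hguess y (by omega)).2)
  rw [hcount, Nat.count_nth_of_infinite (p := (· ∈ H)) hinf]

theorem exists_mem_stageColor_nth {H : Set ℕ} (hinf : H.Infinite) {e z : ℕ} (hez : e < z)
    (hguess : ∀ y ≤ Nat.nth (· ∈ H) (2 * 3 ^ e), (guess e y z = true ↔ y ∈ H))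
    {I : Finset ℕ} (hIK : I ⊆ range (2 * 3 ^ e)) (hI : 3 ^ e ≤ #I) :
    ∃ i ∈ I, stageColor (Nat.nth (· ∈ H) i) z = bif i < 3 ^ e then 0 else 1 := by
  obtain ⟨x, hx, hmin⟩ := exists_forall_not_claims z (S := I.image (Nat.nth (· ∈ H)))
    (by rwa [card_image_of_injective _ (Nat.nth_injective (p := (· ∈ H)) hinf)])
  obtain ⟨i, hiI, rfl⟩ := mem_image.1 hx
  have hiK := mem_range.1 (hIK hiI)
  obtain ⟨hg, hr⟩ := guess_nth_and_rank_nth hinf hguess hiK.le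
  refine ⟨i, hiI, ?_⟩
  rw [stageColor_eq_of_least_claims hez (by simp [claims, hg, hr, hiK]) hmin, hr]

theorem not_homogeneous {H : Set ℕ} (hd : Delta2 H) (hinf : H.Infinite) (h : ℕ) :
    ¬ ∀ x ∈ H, ∀ y ∈ H, x ≠ y → coloring x y = h := by
  intro hhom
  obtain ⟨e, he⟩ := exists_guess_eventually hd
  obtain ⟨z, hzH, hguess, haz, hez⟩ : ∃ z ∈ H,
      (∀ y ≤ Nat.nth (· ∈ H) (2 * 3 ^ e), (guess e y z = true ↔ y ∈ H)) ∧
        Nat.nth (· ∈ H) (2 * 3 ^ e) < z ∧ e < z :=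
    ((Nat.frequently_atTop_iff_infinite.2 hinf).and_eventually <|
      ((eventually_all_finite (Set.finite_Iic _)).2 fun y _ => he y).and
        ((eventually_gt_atTop _).and (eventually_gt_atTop _))).exists
  have hstage : ∀ i ≤ 2 * 3 ^ e, stageColor (Nat.nth (· ∈ H) i) z = h := fun i hi => by
    have hiz : Nat.nth (· ∈ H) i < z := (Nat.nth_monotone (p := (· ∈ H)) hinf hi).trans_lt haz
    have := hhom _ (Nat.nth_mem_of_infinite (p := (· ∈ H)) hinf i) z hzH hiz.ne
    rwa [coloring, decide_eq_true hiz, cond_true] at this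
  obtain ⟨i, hi, hi0⟩ := exists_mem_stageColor_nth hinf hez hguess (I := range (3 ^ e))
    (range_subset_range.2 (by omega)) (by simp)
  obtain ⟨j, hj, hj1⟩ := exists_mem_stageColor_nth hinf hez hguess (I := Ico (3 ^ e) (2 * 3 ^ e))
    (fun j hj => mem_range.2 (mem_Ico.1 hj).2) (by simp; omega)
  rw [mem_range] at hi
  rw [mem_Ico] at hj
  rw [hstage i (by omega), decide_eq_true hi, cond_true] at hi0
  rw [hstage j (by omega), decide_eq_false (by omega), cond_false] at hj1
  omega

end Jockusch

/-- (i) if a recursive coloring c admits an Erdős tree with an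
infinite branch r that is Δ⁰₂, then c has an infinite Δ⁰₂ homogeneous set; hence
(ii), by Jockusch's theorem (a recursive 2-coloring of pairs with no infinite Σ⁰₂
homogeneous set), there is a recursive coloring for which no infinite branch of
any of its Erdős trees is Δ⁰₂. -/
theorem branch_not_delta2 :
    (∀ k : ℕ, 2 ≤ k → ∀ c : ℕ → ℕ → ℕ, Computable₂ c →
      (∀ x y, c x y = c y x) → (∀ x y, c x y < k) →
      ∀ (T : Set ℕ) (anc : ℕ → ℕ → Prop) (r : Set ℕ),
        IsErdosTree c T anc → IsInfBranchN T anc r → Delta2 r →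
        ∃ H : Set ℕ, Delta2 H ∧ H.Infinite ∧
          ∃ h < k, ∀ x ∈ H, ∀ y ∈ H, x ≠ y → c x y = h) ∧
    (∃ c : ℕ → ℕ → ℕ, Computable₂ c ∧ (∀ x y, c x y = c y x) ∧
      (∀ x y, c x y < 2) ∧
      ∀ (T : Set ℕ) (anc : ℕ → ℕ → Prop) (r : Set ℕ),
        IsErdosTree c T anc → IsInfBranchN T anc r → ¬ Delta2 r) := by
  refine ⟨fun k _ c hc hsym hlt T anc r hT hB hd => hB.exists_delta2_homogeneous hc hsym hlt hT hd,
    Jockusch.coloring, Jockusch.computable₂_coloring, Jockusch.coloring_comm,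
    Jockusch.coloring_lt_two, fun T anc r hT hB hd => ?_⟩
  obtain ⟨H, hH, hinf, h, -, hhom⟩ := hB.exists_delta2_homogeneous Jockusch.computable₂_coloring
    Jockusch.coloring_comm Jockusch.coloring_lt_two hT hd
  exact Jockusch.not_homogeneous hH hinf h hhom
end
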